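/- arXiv:1101.3603 — 4 statements merged into one kernel-verified Lean document; each statement's English description precedes it below -/
import Mathlib

section
/- Let R be a UFD (e.g. K[x₁,...,xₙ] for a field K of characteristic zero), and f, g ∈ R[x] with deg f = d₁ ≥ d₂ = deg g. Let l = leadingCoeff(g), δ = d₁ - d₂, and let q, r satisfy l^(δ+1)·f + q·g = r with deg r < deg g (pseudo-division). If r₁ = content(f) and r₂ = content(g), then r₁ divides q, r₂^(d₁-d₂) divides q, r₁ divides r, and r₂^(d₁-d₂+1) divides r. -/
/-!
Pseudo-division by a nonzero `g` with a fixed exponent is unique, because `R[X]` is a domain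
and the remainder has degree below `deg g`; and it exists with exponent `δ + 1` for every
dividend of degree at most `deg g + δ`. So pseudo-dividing `primPart f` by `g` and multiplying
by `content f` yields the pseudo-division of `f`, which is therefore divisible by `content f`.
For `g = c · primPart g` one has `lc g = c · lc (primPart g)`, so `c^(δ+1)` times the
pseudo-division of `f` by `primPart g` is the pseudo-division of `f` by `g` up to the quotient
`q · c` in place of `q`, since `q · g = (q · c) · primPart g`.
-/

namespace Polynomial

variable {R : Type*} [CommRing R]

theorem degree_C_leadingCoeff_mul_sub_lt {f g : R[X]} {n : ℕ}
    (hf : f.degree < ↑(g.natDegree + n + 1)) :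
    (C g.leadingCoeff * f - C (f.coeff (g.natDegree + n)) * X ^ n * g).degree
      < ↑(g.natDegree + n) := by
  rw [degree_lt_iff_coeff_zero]
  intro k hk
  rw [coeff_sub, coeff_C_mul, mul_assoc, coeff_C_mul, coeff_X_pow_mul', if_pos (by omega)]
  rcases hk.eq_or_lt with rfl | hk
  · rw [Nat.add_sub_cancel, leadingCoeff, mul_comm, sub_self]
  · rw [(degree_lt_iff_coeff_zero f _).mp hf k hk,
      coeff_eq_zero_of_natDegree_lt (by omega : g.natDegree < k - n), mul_zero, mul_zero, sub_zero]

theorem exists_C_leadingCoeff_pow_mul_eq_mul_add {g : R[X]} (hg : g ≠ 0) :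
    ∀ (n : ℕ) (f : R[X]), f.degree < ↑(g.natDegree + n) →
      ∃ q r : R[X], C g.leadingCoeff ^ n * f = q * g + r ∧ r.degree < g.degree
  | 0, f, hf => ⟨0, f, by simp, by rwa [degree_eq_natDegree hg]⟩
  | n + 1, f, hf => by
    obtain ⟨q, r, heq, hr⟩ := exists_C_leadingCoeff_pow_mul_eq_mul_add hg n _
      (degree_C_leadingCoeff_mul_sub_lt hf)
    refine ⟨q + C (g.leadingCoeff ^ n * f.coeff (g.natDegree + n)) * X ^ n, r, ?_, hr⟩
    rw [C_mul, C_pow]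
    linear_combination heq

variable [IsDomain R]

theorem eq_and_eq_of_mul_add_eq_mul_add {a b c d g : R[X]} (hg : g ≠ 0)
    (h : a * g + b = c * g + d) (hb : b.degree < g.degree) (hd : d.degree < g.degree) :
    a = c ∧ b = d := by
  have hdiv : (a - c) * g = d - b := by linear_combination h
  have hbd : d - b = 0 := eq_zero_of_dvd_of_degree_lt (Dvd.intro_left _ hdiv)
    ((degree_sub_le d b).trans_lt (max_lt hd hb))
  rw [hbd, mul_eq_zero, or_iff_left hg, sub_eq_zero] at hdiv
  exact ⟨hdiv, (sub_eq_zero.mp hbd).symm⟩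

theorem C_dvd_and_C_dvd_of_pseudo_division {c : R} {n : ℕ} {f g q r : R[X]} (hg : g ≠ 0)
    (hf : f.degree < ↑(g.natDegree + n))
    (heq : C g.leadingCoeff ^ n * (C c * f) + q * g = r) (hr : r.degree < g.degree) :
    C c ∣ q ∧ C c ∣ r := by
  obtain ⟨q', r', heq', hr'⟩ := exists_C_leadingCoeff_pow_mul_eq_mul_add hg n f hf
  have hr'c : (C c * r').degree < g.degree := by
    rw [← smul_eq_C_mul]
    exact (degree_smul_le c r').trans_lt hr'
  obtain ⟨hq, rfl⟩ := eq_and_eq_of_mul_add_eq_mul_add hg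
    (by linear_combination heq - C c * heq' : (C c * q') * g + C c * r' = -q * g + r) hr'c hr
  exact ⟨⟨-q', by linear_combination hq⟩, dvd_mul_right _ _⟩

end Polynomial

open Polynomial

theorem content_divides_pseudo_division_general {R : Type*} [CommRing R] [IsDomain R]
    [UniqueFactorizationMonoid R] [NormalizedGCDMonoid R]
    (f g q r : Polynomial R) (hg : g ≠ 0)
    (heq : Polynomial.C g.leadingCoeff ^ (f.natDegree - g.natDegree + 1) * f + q * g = r)
    (hr : r.degree < g.degree) :
    Polynomial.C f.content ∣ q ∧
    Polynomial.C (g.content ^ (f.natDegree - g.natDegree)) ∣ q ∧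
    Polynomial.C f.content ∣ r ∧
    Polynomial.C (g.content ^ (f.natDegree - g.natDegree + 1)) ∣ r := by
  set n := f.natDegree - g.natDegree + 1
  have hfn (p : R[X]) (hp : p.natDegree = f.natDegree) : p.degree < ↑(g.natDegree + n) :=
    (degree_le_natDegree).trans_lt (by rw [hp]; exact_mod_cast (by omega))
  obtain ⟨hq₁, hr₁⟩ := C_dvd_and_C_dvd_of_pseudo_division hg (hfn _ f.natDegree_primPart)
    (f.eq_C_content_mul_primPart ▸ heq) hr
  have hg' : g = C g.content * g.primPart := g.eq_C_content_mul_primPart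
  have hl : g.leadingCoeff = g.content * g.primPart.leadingCoeff := by
    rw [← leadingCoeff_C g.content, ← leadingCoeff_mul, ← hg']
  have heq' : C g.primPart.leadingCoeff ^ n * (C (g.content ^ n) * f)
      + (q * C g.content) * g.primPart = r := by
    rw [← heq, hl, C_mul, C_pow]
    linear_combination (-q) * hg'
  obtain ⟨hq₂, hr₂⟩ := C_dvd_and_C_dvd_of_pseudo_division g.primPart_ne_zero
    (by rw [natDegree_primPart]; exact hfn f rfl) heq'
    (by rwa [degree_eq_natDegree g.primPart_ne_zero, natDegree_primPart,
      ← degree_eq_natDegree hg])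
  have hc : C g.content ≠ 0 := C_ne_zero.mpr (mt content_eq_zero_iff.mp hg)
  refine ⟨hq₁, ?_, hr₁, hr₂⟩
  rwa [pow_succ, C_mul, mul_dvd_mul_iff_right hc] at hq₂

/-- In a UFD `R`, for pseudo-division `l^(δ+1)·f + q·g = r` with `deg r < deg g`,
if `r₁ = content f` and `r₂ = content g`, then `r₁ ∣ q`, `r₂^(d₁-d₂) ∣ q`,
`r₁ ∣ r` and `r₂^(d₁-d₂+1) ∣ r` (coefficientwise, i.e. as constant polynomials). -/
theorem content_divides_pseudo_division {R : Type*} [CommRing R] [IsDomain R]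
    [UniqueFactorizationMonoid R] [NormalizedGCDMonoid R]
    (f g q r : Polynomial R) (hg : g ≠ 0)
    (hdeg : g.natDegree ≤ f.natDegree)
    (heq : Polynomial.C g.leadingCoeff ^ (f.natDegree - g.natDegree + 1) * f + q * g = r)
    (hr : r.degree < g.degree) :
    Polynomial.C f.content ∣ q ∧
    Polynomial.C (g.content ^ (f.natDegree - g.natDegree)) ∣ q ∧
    Polynomial.C f.content ∣ r ∧
    Polynomial.C (g.content ^ (f.natDegree - g.natDegree + 1)) ∣ r :=
  content_divides_pseudo_division_general f g q r hg heq hr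
end

section
/- Let R be a UFD, and f, g ∈ R[x] with deg f = d₁ > d₂ = deg g ≥ 1. Write the pseudo-division identity l^(δ+1)·f + q·g = r where l = leadingCoeff(g), δ = d₁ - d₂. Write q = l·t·x + s where s ∈ R is the constant-coefficient contribution as in the pseudo-division construction (i.e., s is the coefficient of x⁰ in q). If gcd(l, s) = 1, then the content of g is a unit (g is primitive). -/
/-!
Compare the coefficients of degree `deg g` in `l^(δ+1) f + q g = r`: that of `r` vanishes, and
every term on the left is a multiple of `l`, so cancelling `l` expresses `s` as
`-(l^δ f_{deg g} + (t X g)_{deg g})`. A common divisor of the coefficients of `g` divides `l`,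
hence `l^δ` as `δ ≥ 1`, and every coefficient of `t X g`; so it divides `gcd(l, s) = 1`.
-/

open Polynomial

namespace Polynomial

variable {R : Type*} [CommRing R]

theorem coeff_natDegree_mul_C_leadingCoeff_mul_X_add_C (g t : R[X]) (s : R) :
    ((C g.leadingCoeff * t * X + C s) * g).coeff g.natDegree =
      g.leadingCoeff * ((t * X * g).coeff g.natDegree + s) := by
  rw [add_mul, coeff_add, mul_assoc (C _) t X, mul_assoc (C _), coeff_C_mul, coeff_C_mul,
    coeff_natDegree]
  ring

theorem eq_neg_of_pseudoDivision [IsDomain R] {f g t r : R[X]} {s : R} {k : ℕ}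
    (heq : C g.leadingCoeff ^ (k + 1) * f + (C g.leadingCoeff * t * X + C s) * g = r)
    (hr : r.degree < g.degree) :
    s = -(g.leadingCoeff ^ k * f.coeff g.natDegree + (t * X * g).coeff g.natDegree) := by
  have hg : g ≠ 0 := ne_zero_of_degree_gt hr
  have hrn : r.coeff g.natDegree = 0 :=
    coeff_eq_zero_of_degree_lt (degree_eq_natDegree hg ▸ hr)
  have hcoeff := congrArg (coeff · g.natDegree) heq
  simp only [coeff_add, ← C_pow, coeff_C_mul, coeff_natDegree_mul_C_leadingCoeff_mul_X_add_C,
    hrn] at hcoeff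
  have hl : g.leadingCoeff * (g.leadingCoeff ^ k * f.coeff g.natDegree +
      (t * X * g).coeff g.natDegree + s) = 0 := by
    linear_combination hcoeff
  linear_combination (mul_eq_zero.mp hl).resolve_left (leadingCoeff_ne_zero.mpr hg)

end Polynomial

theorem primitive_of_coprime_leadingCoeff_const_general {R : Type*} [CommRing R] [IsDomain R]
    (f g q r : Polynomial R)
    (hdeg : g.natDegree < f.natDegree)
    (heq : Polynomial.C g.leadingCoeff ^ (f.natDegree - g.natDegree + 1) * f + q * g = r)
    (hr : r.degree < g.degree)
    (hq : ∃ t : Polynomial R,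
      q = Polynomial.C g.leadingCoeff * t * Polynomial.X + Polynomial.C (q.coeff 0))
    (hcop : IsRelPrime g.leadingCoeff (q.coeff 0)) :
    g.IsPrimitive := by
  obtain ⟨t, ht⟩ := hq
  rw [ht] at heq
  intro c hc
  have hcg := C_dvd_iff_dvd_coeff c g |>.mp hc
  refine hcop (hcg _) ?_
  rw [eq_neg_of_pseudoDivision heq hr]
  exact dvd_neg.mpr <| dvd_add
    (dvd_mul_of_dvd_left (dvd_pow (hcg _) (Nat.sub_ne_zero_of_lt hdeg)) _)
    (C_dvd_iff_dvd_coeff c _ |>.mp (dvd_mul_of_dvd_right hc _) _)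

/-- If in the pseudo-division `l^(δ+1)·f + q·g = r` (with `deg f = d₁ > d₂ = deg g ≥ 1`)
the quotient has the form `q = l·t·x + s` with `s = q.coeff 0 ∈ R`, and `gcd(l, s) = 1`,
then `g` is primitive. -/
theorem primitive_of_coprime_leadingCoeff_const {R : Type*} [CommRing R] [IsDomain R]
    [UniqueFactorizationMonoid R]
    (f g q r : Polynomial R)
    (hdeg2 : 1 ≤ g.natDegree) (hdeg : g.natDegree < f.natDegree)
    (heq : Polynomial.C g.leadingCoeff ^ (f.natDegree - g.natDegree + 1) * f + q * g = r)
    (hr : r.degree < g.degree)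
    (hq : ∃ t : Polynomial R,
      q = Polynomial.C g.leadingCoeff * t * Polynomial.X + Polynomial.C (q.coeff 0))
    (hcop : IsRelPrime g.leadingCoeff (q.coeff 0)) :
    g.IsPrimitive :=
  primitive_of_coprime_leadingCoeff_const_general f g q r hdeg heq hr hq hcop
end

section
/- Let R be a UFD with fraction field K, and let f, g ∈ R[x] be primitive with deg f ≥ deg g ≥ 1 and gcd(f, g) = 1 in K[x]. Then there exist m ∈ R (nonzero) and q, r ∈ R[x] with deg r < deg g such that m·f = q·g + r, gcd(m, content(q)) = 1 and gcd(m, r) = 1 in R[x]. -/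
open Polynomial

/-- Normalized pseudo-division in a UFD `R` with fraction field `K`: for primitive
`f, g ∈ R[x]` with `deg f ≥ deg g ≥ 1` coprime in `K[x]`, there are a nonzero `m ∈ R`
and `q, r ∈ R[x]` with `deg r < deg g`, `m·f = q·g + r`, and no nonunit of `R` divides
both `m` and all coefficients of `q` (resp. of `r`). -/
theorem normalized_pseudo_division_exists {R : Type*} [CommRing R] [IsDomain R]
    [UniqueFactorizationMonoid R]
    (K : Type*) [Field K] [Algebra R K] [IsFractionRing R K]
    (f g : Polynomial R) (hf : f.IsPrimitive) (hg : g.IsPrimitive)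
    (hdeg2 : 1 ≤ g.natDegree) (hdeg : g.natDegree ≤ f.natDegree)
    (hcop : IsCoprime (f.map (algebraMap R K)) (g.map (algebraMap R K))) :
    ∃ (m : R) (q r : Polynomial R), m ≠ 0 ∧
      r.degree < g.degree ∧
      Polynomial.C m * f = q * g + r ∧
      (∀ d : R, d ∣ m → (∀ j, d ∣ q.coeff j) → IsUnit d) ∧
      (∀ d : R, d ∣ m → (∀ j, d ∣ r.coeff j) → IsUnit d) := by
  classical
  have hinj : Function.Injective (algebraMap R K) := IsFractionRing.injective R K
  set φ := algebraMap R K with hφ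
  have hmapinj : Function.Injective (Polynomial.map φ) :=
    Polynomial.map_injective φ hinj
  have hg0 : g ≠ 0 := by
    intro h
    simp [h] at hdeg2
  have hgK : g.map φ ≠ 0 := fun h => hg0 (hmapinj (by simpa using h))
  have hdegmap : (g.map φ).degree = g.degree := degree_map_eq_of_injective hinj g
  -- The set of admissible multipliers
  set S : Set R :=
    {m | m ≠ 0 ∧ ∃ q r : Polynomial R, r.degree < g.degree ∧ C m * f = q * g + r} with hSdef
  -- S is nonempty: clear denominators in the division over K
  have hSne : S.Nonempty := by
    set Q : Polynomial K := f.map φ / g.map φ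
    set Rr : Polynomial K := f.map φ % g.map φ
    obtain ⟨b₁, hb₁⟩ :=
      IsLocalization.integerNormalization_map_to_map (nonZeroDivisors R) Q
    obtain ⟨b₂, hb₂⟩ :=
      IsLocalization.integerNormalization_map_to_map (nonZeroDivisors R) Rr
    set N₁ := IsLocalization.integerNormalization (nonZeroDivisors R) Q
    set N₂ := IsLocalization.integerNormalization (nonZeroDivisors R) Rr
    have hb₁0 : (b₁ : R) ≠ 0 := nonZeroDivisors.ne_zero b₁.2
    have hb₂0 : (b₂ : R) ≠ 0 := nonZeroDivisors.ne_zero b₂.2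
    refine ⟨(b₁ : R) * (b₂ : R), mul_ne_zero hb₁0 hb₂0,
      C (b₂ : R) * N₁, C (b₁ : R) * N₂, ?_, ?_⟩
    · -- degree bound
      have hmodlt : Rr.degree < (g.map φ).degree :=
        EuclideanDomain.mod_lt _ hgK
      have hdr : (C (b₁ : R) * N₂).degree = ((C (b₁ : R) * N₂).map φ).degree :=
        (degree_map_eq_of_injective hinj _).symm
      rw [hdr, Polynomial.map_mul, Polynomial.map_C, hb₂]
      have : (C (φ (b₁ : R)) * ((b₂ : R) • Rr)).degree ≤ Rr.degree := by
        rw [← algebraMap_smul K (b₂ : R) Rr, smul_eq_C_mul, ← mul_assoc, ← map_mul]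
        calc (C (φ ((b₁ : R)) * φ (b₂ : R)) * Rr).degree
            ≤ (C (φ (b₁ : R) * φ (b₂ : R))).degree + Rr.degree := degree_mul_le _ _
          _ ≤ 0 + Rr.degree := add_le_add degree_C_le le_rfl
          _ = Rr.degree := by rw [zero_add]
      calc ((C (φ (b₁ : R))) * ((b₂ : R) • Rr)).degree ≤ Rr.degree := this
        _ < (g.map φ).degree := hmodlt
        _ = g.degree := hdegmap
    · -- the equation, via injectivity of map
      apply hmapinj
      have hdm : (g.map φ) * Q + Rr = f.map φ := EuclideanDomain.div_add_mod _ _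
      simp only [Polynomial.map_add, Polynomial.map_mul, Polynomial.map_C]
      rw [hb₁, hb₂]
      rw [← algebraMap_smul K (b₁ : R) Q, ← algebraMap_smul K (b₂ : R) Rr,
        smul_eq_C_mul, smul_eq_C_mul]
      simp only [map_mul, ← hφ]
      rw [← hdm]
      ring
  -- pick a minimal element of S for strict divisibility
  obtain ⟨m, hmS, hmin⟩ := (wellFounded_dvdNotUnit (α := R)).has_min S hSne
  obtain ⟨hm0, q, r, hdr, heq⟩ := hmS
  -- key: no prime divides m and all coefficients of q
  have key : ∀ p : R, Prime p → p ∣ m → (C p ∣ q) → False := by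
    intro p hp hpm hpq
    obtain ⟨m', rfl⟩ := hpm
    obtain ⟨q', rfl⟩ := hpq
    have hpr : C p ∣ r := by
      have : r = C (p * m') * f - C p * q' * g := by rw [heq]; ring
      rw [this]
      exact dvd_sub (by rw [map_mul]; exact Dvd.dvd.mul_right (dvd_mul_right _ _) _)
        (Dvd.dvd.mul_right (Dvd.dvd.mul_right (dvd_refl _) _) _)
    obtain ⟨r', rfl⟩ := hpr
    have hCp0 : (C p : Polynomial R) ≠ 0 := by
      simpa using hp.ne_zero
    have hm'0 : m' ≠ 0 := by rintro rfl; simp at hm0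
    have heq' : C m' * f = q' * g + r' := by
      apply mul_left_cancel₀ hCp0
      rw [← mul_assoc, ← map_mul, heq]
      ring
    have hdr' : r'.degree < g.degree := by
      rcases eq_or_ne r' 0 with h | h
      · rw [h, degree_zero]
        exact lt_of_le_of_lt bot_le hdr
      · have : (C p * r').degree = r'.degree := by
          rw [degree_mul, degree_C hp.ne_zero, zero_add]
        exact this ▸ hdr
    exact hmin m' ⟨hm'0, q', r', hdr', heq'⟩ ⟨hm'0, p, hp.not_unit, by ring⟩
  have hq_cond : ∀ d : R, d ∣ m → (∀ j, d ∣ q.coeff j) → IsUnit d := by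
    intro d hdm hdq
    by_contra hdu
    have hd0 : d ≠ 0 := by rintro rfl; exact hm0 (zero_dvd_iff.mp hdm)
    obtain ⟨p, hpirr, hpd⟩ := WfDvdMonoid.exists_irreducible_factor hdu hd0
    have hp : Prime p := (UniqueFactorizationMonoid.irreducible_iff_prime).mp hpirr
    exact key p hp (hpd.trans hdm)
      ((C_dvd_iff_dvd_coeff p q).mpr fun j => (hpd.trans (hdq j)))
  refine ⟨m, q, r, hm0, hdr, heq, hq_cond, ?_⟩
  intro d hdm hdr'
  by_contra hdu
  have hd0 : d ≠ 0 := by rintro rfl; exact hm0 (zero_dvd_iff.mp hdm)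
  obtain ⟨p, hpirr, hpd⟩ := WfDvdMonoid.exists_irreducible_factor hdu hd0
  have hp : Prime p := (UniqueFactorizationMonoid.irreducible_iff_prime).mp hpirr
  have hpm : p ∣ m := hpd.trans hdm
  have hpr : C p ∣ r := (C_dvd_iff_dvd_coeff p r).mpr fun j => hpd.trans (hdr' j)
  have hpqg : C p ∣ q * g := by
    have : q * g = C m * f - r := by rw [heq]; ring
    rw [this]
    exact dvd_sub (((C_dvd_iff_dvd_coeff p (C m)).mpr (fun j => by
      rcases eq_or_ne j 0 with rfl | hj
      · simpa using hpm
      · simp [coeff_C, hj])).mul_right f) hpr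
  have hCp : Prime (C p : Polynomial R) := Polynomial.prime_C_iff.mpr hp
  rcases hCp.dvd_or_dvd hpqg with h | h
  · exact key p hp hpm h
  · exact hp.not_unit (hg p h)
end

section
/- Let K be an algebraically closed field, and let f, g, r ∈ K[x,y] and m ∈ K[x] nonzero, with m·f = q·g + r for some q ∈ K[x,y], wheref, g are coprime and the systems (f,g), (m,g), (g,r) are all zero-dimensional. Then for every point p ∈ V(f,g), the intersection multiplicity of p in (f,g) equals the intersection multiplicity of p in (g,r) minus the intersection multiplicity of p in (m,g) (where multiplicity at a point not in a variety is 0). -/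
open MvPolynomial

/-- The intersection multiplicity of the pair `(a, b)` of bivariate polynomials at the
point `pt`: the `K`-dimension of the localization of `K[x,y]/(a,b)` at the maximal ideal
of `pt` (it is `0` when `pt` is not a common zero). -/
noncomputable def interMult {K : Type*} [Field K] (pt : Fin 2 → K)
    (a b : MvPolynomial (Fin 2) K) : ℕ :=
  have hm : (RingHom.ker (MvPolynomial.eval pt : MvPolynomial (Fin 2) K →+* K)).IsMaximal :=
    RingHom.ker_isMaximal_of_surjective _ (fun k => ⟨MvPolynomial.C k, by simp⟩)
  have : (RingHom.ker (MvPolynomial.eval pt : MvPolynomial (Fin 2) K →+* K)).IsPrime :=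
    hm.isPrime
  let L := Localization.AtPrime (RingHom.ker (MvPolynomial.eval pt : MvPolynomial (Fin 2) K →+* K))
  Module.finrank K
    (L ⧸ Ideal.span {algebraMap (MvPolynomial (Fin 2) K) L a, algebraMap (MvPolynomial (Fin 2) K) L b})

/-- Embedding of `K[x]` into `K[x,y]`, sending `x` to the first variable. -/
noncomputable def embX {K : Type*} [Field K] (m : Polynomial K) : MvPolynomial (Fin 2) K :=
  Polynomial.aeval (X 0 : MvPolynomial (Fin 2) K) m

/-!
Localize at `p`, writing `L` for the local ring. Since `m f = q g + r`, the ideals `(g, r)` and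
`(g, m f)` of `L` coincide. Coprimality of `f` and `g` survives localization, so `f` is a
nonzerodivisor modulo `g`, and then
`0 → L/(g, m) --(· f)--> L/(g, m f) → L/(g, f) → 0`
is exact. The middle term is finite-dimensional: by the Nullstellensatz `K[x,y]/(g, r)` is,
since `V(g, r)` is finite, and it surjects onto its localization because it is Artinian.
Hence `dim L/(g, r) = dim L/(g, m) + dim L/(g, f)`.
-/

open Module

theorem MvPolynomial.finite_quotient_of_monic_mem {σ R : Type*} [Finite σ] [CommRing R]
    (I : Ideal (MvPolynomial σ R))
    (h : ∀ i, ∃ c : Polynomial R, c.Monic ∧ Polynomial.aeval (X i) c ∈ I) :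
    Module.Finite R (MvPolynomial σ R ⧸ I) := by
  have hadj : Algebra.adjoin R (Set.range fun i ↦ Ideal.Quotient.mkₐ R I (X i)) = ⊤ := by
    rw [Set.range_comp', Algebra.adjoin_image, adjoin_range_X, Algebra.map_top,
      AlgHom.range_eq_top]
    exact Ideal.Quotient.mkₐ_surjective R I
  rw [Module.finite_def, ← Algebra.top_toSubmodule, ← hadj]
  refine fg_adjoin_of_finite (Set.finite_range _) ?_
  rintro _ ⟨i, rfl⟩
  obtain ⟨c, hc, hcI⟩ := h i
  exact ⟨c, hc, by
    rw [← Polynomial.aeval_def, Polynomial.aeval_algHom_apply, Ideal.Quotient.mkₐ_eq_mk,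
      Ideal.Quotient.eq_zero_iff_mem]
    exact hcI⟩

theorem MvPolynomial.finite_quotient_of_finite_zeroLocus {σ K : Type*} [Finite σ] [Field K]
    [IsAlgClosed K] (I : Ideal (MvPolynomial σ K)) (hI : (zeroLocus K I).Finite) :
    Module.Finite K (MvPolynomial σ K ⧸ I) := by
  refine finite_quotient_of_monic_mem I fun i ↦ ?_
  let c : Polynomial K := ∏ x ∈ hI.toFinset, (Polynomial.X - Polynomial.C (x i))
  have hc : Polynomial.aeval (X i) c ∈ I.radical := by
    rw [← vanishingIdeal_zeroLocus_eq_radical (K := K), mem_vanishingIdeal_iff]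
    intro x hx
    rw [← Polynomial.aeval_algHom_apply, aeval_X, map_prod]
    exact Finset.prod_eq_zero (hI.mem_toFinset.mpr hx) (by simp)
  obtain ⟨n, hn⟩ := hc
  exact ⟨c ^ n, (Polynomial.monic_prod_of_monic _ _ fun x _ ↦ Polynomial.monic_X_sub_C _).pow n,
    by rwa [map_pow]⟩

theorem IsLocalization.finite_quotient_map {K R S : Type*} [CommRing K] [IsArtinianRing K]
    [CommRing R] [CommRing S] [Algebra K R] [Algebra R S] [Algebra K S] [IsScalarTower K R S]
    (M : Submonoid R) [IsLocalization M S] (I : Ideal R) [Module.Finite K (R ⧸ I)] :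
    Module.Finite K (S ⧸ I.map (algebraMap R S)) := by
  have : IsArtinianRing (R ⧸ I) := IsArtinianRing.of_finite K (R ⧸ I)
  exact Module.Finite.of_surjective
    (Ideal.quotientMapₐ _ (IsScalarTower.toAlgHom K R S) I.le_comap_map).toLinearMap
    (IsArtinianRing.localization_surjective (Algebra.algebraMapSubmonoid (R ⧸ I) M) _)

theorem IsLocalization.dvd_of_dvd_mul_of_isRelPrime {R S : Type*} [CommRing R]
    [DecompositionMonoid R] [CommRing S] [Algebra R S] (M : Submonoid R) [IsLocalization M S]
    {f g : R} (h : IsRelPrime g f) {y : S}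
    (hy : algebraMap R S g ∣ algebraMap R S f * y) : algebraMap R S g ∣ y := by
  obtain ⟨⟨y, s⟩, rfl⟩ := IsLocalization.mk'_surjective M y
  simp only [← Ideal.mem_span_singleton, ← Set.image_singleton, ← Ideal.map_span,
    IsLocalization.mul_mk'_eq_mk'_of_mul, IsLocalization.mk'_mem_map_algebraMap_iff M] at hy ⊢
  obtain ⟨t, ht, hgt⟩ := hy
  rw [Ideal.mem_span_singleton, mul_left_comm] at hgt
  exact ⟨t, ht, Ideal.mem_span_singleton.mpr (h.dvd_of_dvd_mul_left hgt)⟩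

theorem Ideal.finrank_quotient_span_pair_mul {K B : Type*} [Field K] [CommRing B] [Algebra K B]
    (g m f : B) (hf : ∀ y, g ∣ f * y → g ∣ y) [Module.Finite K (B ⧸ span {g, m * f})] :
    finrank K (B ⧸ span {g, m * f}) =
      finrank K (B ⧸ span {g, m}) + finrank K (B ⧸ span {g, f}) := by
  have hmul : span {g, m} ≤ Submodule.comap (LinearMap.mulLeft B f) (span {g, m * f}) := by
    intro x hx
    obtain ⟨a, b, rfl⟩ := mem_span_pair.mp hx
    exact mem_span_pair.mpr ⟨f * a, b, by rw [LinearMap.mulLeft_apply]; ring⟩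
  have hle : span {g, m * f} ≤ span {g, f} := by
    rw [span_le]
    rintro _ (rfl | rfl)
    exacts [subset_span (by simp), mul_mem_left _ _ (subset_span (by simp))]
  let φ := (Submodule.mapQ _ _ (LinearMap.mulLeft B f) hmul).restrictScalars K
  let ψ := (Quotient.factorₐ K hle).toLinearMap
  have hφ : Function.Injective φ := by
    rw [← LinearMap.ker_eq_bot, eq_bot_iff]
    intro z hz
    obtain ⟨x, rfl⟩ := Quotient.mk_surjective z
    have hfx : f * x ∈ span {g, m * f} := Quotient.eq_zero_iff_mem.mp hz
    obtain ⟨a, b, hab⟩ := mem_span_pair.mp hfx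
    obtain ⟨c, hc⟩ := hf (x - b * m) ⟨a, by linear_combination -hab⟩
    exact (Submodule.mem_bot K).mpr (Quotient.eq_zero_iff_mem.mpr
      (mem_span_pair.mpr ⟨c, b, by linear_combination -hc⟩))
  have hψ : Function.Surjective ψ := Quotient.factor_surjective hle
  have hexact : LinearMap.ker ψ = LinearMap.range φ := by
    ext z
    constructor
    · intro hx
      obtain ⟨x, rfl⟩ := Quotient.mk_surjective z
      obtain ⟨a, b, hab⟩ := mem_span_pair.mp (Quotient.eq_zero_iff_mem.mp hx)
      refine ⟨Quotient.mk _ b, (Quotient.mk_eq_mk_iff_sub_mem (f * b) x).mpr ?_⟩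
      exact mem_span_pair.mpr ⟨-a, 0, by linear_combination -hab⟩
    · rintro ⟨w, rfl⟩
      obtain ⟨b, rfl⟩ := Quotient.mk_surjective w
      have hfb : f * b ∈ span {g, f} := mem_span_pair.mpr ⟨0, b, by ring⟩
      exact Quotient.eq_zero_iff_mem.mpr hfb
  rw [← ψ.finrank_range_add_finrank_ker, LinearMap.range_eq_top.mpr hψ, finrank_top, hexact,
    LinearMap.finrank_range_of_inj hφ, add_comm]

theorem multiplicity_pseudo_division_step_general {K : Type*} [Field K] [IsAlgClosed K]
    (m : Polynomial K) (f g q r : MvPolynomial (Fin 2) K)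
    (heq : embX m * f = q * g + r)
    (hcop : IsRelPrime f g)
    (hfin3 : {p : Fin 2 → K | eval p g = 0 ∧ eval p r = 0}.Finite) :
    ∀ p : Fin 2 → K, eval p f = 0 → eval p g = 0 →
      (interMult p f g : ℤ) = (interMult p g r : ℤ) - (interMult p (embX m) g : ℤ) := by
  intro p _ _
  let P := RingHom.ker (eval p : MvPolynomial (Fin 2) K →+* K)
  have : P.IsPrime := RingHom.ker_isPrime _
  let L := Localization.AtPrime P
  let ι := algebraMap (MvPolynomial (Fin 2) K) L
  have hr : Ideal.span {g, r} = Ideal.span {g, embX m * f} := by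
    rw [heq, add_comm, Ideal.span_pair_add_mul_left]
  have hfin : Module.Finite K (MvPolynomial (Fin 2) K ⧸ Ideal.span {g, embX m * f}) := by
    refine finite_quotient_of_finite_zeroLocus _ (hfin3.subset fun x hx ↦ ?_)
    rw [← hr, mem_zeroLocus_iff] at hx
    exact ⟨hx g (Ideal.subset_span (by simp)), hx r (Ideal.subset_span (by simp))⟩
  have hrL : Ideal.span {ι g, ι r} = Ideal.span {ι g, ι (embX m) * ι f} := by
    simpa only [Ideal.map_span, Set.image_pair, map_mul] using congrArg (Ideal.map ι) hr
  have hfinL := IsLocalization.finite_quotient_map (K := K) (S := L) P.primeCompl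
    (Ideal.span {g, embX m * f})
  rw [Ideal.map_span, Set.image_pair, map_mul] at hfinL
  have hadd := Ideal.finrank_quotient_span_pair_mul (K := K) (ι g) (ι (embX m)) (ι f)
    (fun _ ↦ IsLocalization.dvd_of_dvd_mul_of_isRelPrime P.primeCompl hcop.symm)
  change (finrank K (L ⧸ Ideal.span {ι f, ι g}) : ℤ) =
    finrank K (L ⧸ Ideal.span {ι g, ι r}) - finrank K (L ⧸ Ideal.span {ι (embX m), ι g})
  rw [Set.pair_comm (ι f), Set.pair_comm (ι (embX m)), hrL, hadd]
  push_cast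
  ring

/-- One normalized pseudo-division step preserves multiplicities:
if `m·f = q·g + r` with `m ∈ K[x]` nonzero, `f, g` coprime, and `(f,g)`, `(m,g)`, `(g,r)`
zero-dimensional, then for every `p ∈ V(f,g)`,
`M_p(f,g) = M_p(g,r) − M_p(m,g)`. -/
theorem multiplicity_pseudo_division_step {K : Type*} [Field K] [IsAlgClosed K]
    (m : Polynomial K) (hm : m ≠ 0) (f g q r : MvPolynomial (Fin 2) K)
    (heq : embX m * f = q * g + r)
    (hcop : IsRelPrime f g)
    (hfin1 : {p : Fin 2 → K | eval p f = 0 ∧ eval p g = 0}.Finite)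
    (hfin2 : {p : Fin 2 → K | eval p (embX m) = 0 ∧ eval p g = 0}.Finite)
    (hfin3 : {p : Fin 2 → K | eval p g = 0 ∧ eval p r = 0}.Finite) :
    ∀ p : Fin 2 → K, eval p f = 0 → eval p g = 0 →
      (interMult p f g : ℤ) = (interMult p g r : ℤ) - (interMult p (embX m) g : ℤ) :=
  multiplicity_pseudo_division_step_general m f g q r heq hcop hfin3
end
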